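/- Let P be a maximal ranked poset of rank n and let s and t be integers with 2 ≤ t ≤ s ≤ n. Let A and B be subsets with A ⊆ P_{s−t}, |A| ≥ 2, B ⊆ P_s, and |B| ≥ 2. Then A, P_{s−1}, and B are pairwise distinct antichains of P and the triple {A, P_{s−1}, B} belongs to Δ*_C(P); in particular the pair {P_{s−1}, B} belongs to E*_C(P). -/

import Mathlib

open Finset
open scoped Classical

variable (P : Type*) [Fintype P] [PartialOrder P]

/-- The comparability graph of a poset. -/
def compGraph : SimpleGraph P where
  Adj x y := x ≠ y ∧ (x ≤ y ∨ y ≤ x)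
  symm := ⟨fun _ _ h => ⟨h.1.symm, h.2.symm⟩⟩
  loopless := ⟨fun _ h => h.1 rfl⟩

/-- A subset `W` of `P` is connected in `P` if the subgraph of the comparability
graph induced on `W` is connected (this includes `W` being nonempty). -/
def ConnIn (W : Set P) : Prop :=
  (SimpleGraph.induce W (compGraph P)).Connected

/-- A poset ideal (down-set). -/
def IsIdealF (I : Finset P) : Prop :=
  ∀ ⦃x y : P⦄, x ∈ I → y ≤ x → y ∈ I

/-- An antichain of the poset. -/
def IsAntichainF (A : Finset P) : Prop :=
  IsAntichain (· ≤ ·) (↑A : Set P)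

/-- The 0/1 indicator vector of a subset of `P`. -/
noncomputable def rho (W : Finset P) : P → ℝ :=
  fun x => if x ∈ W then 1 else 0

/-- The order polytope of `P`. -/
def orderPolytope : Set (P → ℝ) :=
  {f | (∀ x, 0 ≤ f x ∧ f x ≤ 1) ∧ ∀ ⦃x y : P⦄, x ≤ y → f y ≤ f x}

/-- The chain polytope of `P`. -/
def chainPolytope : Set (P → ℝ) :=
  {f | (∀ x, 0 ≤ f x) ∧ ∀ s : Finset P, IsChain (· ≤ ·) (↑s : Set P) → ∑ x ∈ s, f x ≤ 1}

/-- `conv {u, v}` is an edge (1-dimensional exposed face) of the polytope `S`. -/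
def IsEdgeOf (S : Set (P → ℝ)) (u v : P → ℝ) : Prop :=
  u ≠ v ∧ IsExposed ℝ S (convexHull ℝ {u, v})

/-- `conv {u, v, w}` is a triangular 2-face of the polytope `S`. -/
def IsTriFaceOf (S : Set (P → ℝ)) (u v w : P → ℝ) : Prop :=
  u ≠ v ∧ u ≠ w ∧ v ≠ w ∧ IsExposed ℝ S (convexHull ℝ {u, v, w})

/-- The set of maximal elements of a subset of `P`. -/
noncomputable def maxSet (W : Finset P) : Finset P :=
  W.filter (fun x => ∀ y ∈ W, ¬ x < y)

/-- The set of minimal elements of a subset of `P`. -/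
noncomputable def minSet (W : Finset P) : Finset P :=
  W.filter (fun x => ∀ y ∈ W, ¬ y < x)

/-- The poset ideal generated by a subset of `P`. -/
noncomputable def genIdeal (A : Finset P) : Finset P :=
  univ.filter (fun x => ∃ a ∈ A, x ≤ a)

/-- The pair `{I, J}` belongs to `E*_O(P)`. -/
noncomputable def EstarO (I J : Finset P) : Prop :=
  IsIdealF P I ∧ IsIdealF P J ∧ I ≠ J ∧
    IsEdgeOf P (orderPolytope P) (rho P I) (rho P J) ∧
    ¬ IsEdgeOf P (chainPolytope P) (rho P (maxSet P I)) (rho P (maxSet P J))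

/-- The pair `{A, B}` belongs to `E*_C(P)`. -/
noncomputable def EstarC (A B : Finset P) : Prop :=
  IsAntichainF P A ∧ IsAntichainF P B ∧ A ≠ B ∧
    IsEdgeOf P (chainPolytope P) (rho P A) (rho P B) ∧
    ¬ IsEdgeOf P (orderPolytope P) (rho P (genIdeal P A)) (rho P (genIdeal P B))

/-- `Δ_O(P)`: unordered triples of pairwise distinct poset ideals spanning a
triangular 2-face of the order polytope. -/
def DeltaO : Set (Finset (Finset P)) :=
  {T | ∃ I J K : Finset P, T = {I, J, K} ∧ I ≠ J ∧ I ≠ K ∧ J ≠ K ∧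
    IsIdealF P I ∧ IsIdealF P J ∧ IsIdealF P K ∧
    IsTriFaceOf P (orderPolytope P) (rho P I) (rho P J) (rho P K)}

/-- `Δ_C(P)`: unordered triples of pairwise distinct antichains spanning a
triangular 2-face of the chain polytope. -/
def DeltaC : Set (Finset (Finset P)) :=
  {T | ∃ A B C : Finset P, T = {A, B, C} ∧ A ≠ B ∧ A ≠ C ∧ B ≠ C ∧
    IsAntichainF P A ∧ IsAntichainF P B ∧ IsAntichainF P C ∧
    IsTriFaceOf P (chainPolytope P) (rho P A) (rho P B) (rho P C)}

/-- `Δ*_O(P)`: triples in `Δ_O(P)` at least one of whose pairs lies in `E*_O(P)`. -/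
def DeltaStarO : Set (Finset (Finset P)) :=
  {T | T ∈ DeltaO P ∧ ∃ I ∈ T, ∃ J ∈ T, I ≠ J ∧ EstarO P I J}

/-- `Δ*_C(P)`: triples in `Δ_C(P)` at least one of whose pairs lies in `E*_C(P)`. -/
def DeltaStarC : Set (Finset (Finset P)) :=
  {T | T ∈ DeltaC P ∧ ∃ A ∈ T, ∃ B ∈ T, A ≠ B ∧ EstarC P A B}

/-- `r` is a rank function exhibiting `P` as a maximal ranked poset of rank `n`:
`r` is surjective onto `{0, …, n}` and `x < y ↔ r x < r y`. -/
def IsMaxRanked (r : P → ℕ) (n : ℕ) : Prop :=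
  (∀ x, r x ≤ n) ∧ (∀ i, i ≤ n → ∃ x, r x = i) ∧ (∀ x y : P, x < y ↔ r x < r y)

/-- The rank level `P_i`. -/
noncomputable def level (r : P → ℕ) (i : ℕ) : Finset P :=
  univ.filter (fun x => r x = i)

/-- `P` contains an `X`-poset as a subposet. -/
def ContainsX : Prop :=
  ∃ a b c d e : P,
    a ≠ b ∧ a ≠ c ∧ a ≠ d ∧ a ≠ e ∧ b ≠ c ∧ b ≠ d ∧ b ≠ e ∧ c ≠ d ∧ c ≠ e ∧ d ≠ e ∧
    a < c ∧ b < c ∧ c < d ∧ c < e ∧ ¬ a ≤ b ∧ ¬ b ≤ a ∧ ¬ d ≤ e ∧ ¬ e ≤ d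

set_option linter.unusedSectionVars false

lemma rho_mem_chainPolytope {W : Finset P} (hW : IsAntichainF P W) :
    rho P W ∈ chainPolytope P := by
  constructor
  · intro x; by_cases h : x ∈ W <;> simp [rho, h]
  · intro c hc
    have h1 : ∑ x ∈ c, rho P W x = ((c ∩ W).card : ℝ) := by
      simp [rho]
    rw [h1]
    have h2 : (c ∩ W).card ≤ 1 := by
      rw [Finset.card_le_one]
      intro a ha b hb
      simp only [Finset.mem_inter] at ha hb
      by_contra hne
      rcases hc (by exact ha.1) (by exact hb.1) hne with h | h
      · exact hW (by exact_mod_cast ha.2) (by exact_mod_cast hb.2) hne h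
      · exact hW (by exact_mod_cast hb.2) (by exact_mod_cast ha.2) (Ne.symm hne) h
    exact_mod_cast h2

lemma rho_mem_orderPolytope {I : Finset P} (hI : IsIdealF P I) :
    rho P I ∈ orderPolytope P := by
  constructor
  · intro x; by_cases h : x ∈ I <;> simp [rho, h]
  · intro x y hxy
    by_cases hy : y ∈ I
    · have hx : x ∈ I := hI hy hxy
      simp [rho, hy, hx]
    · by_cases hx : x ∈ I <;> simp [rho, hy, hx]

lemma chainPolytope_convex : Convex ℝ (chainPolytope P) := by
  intro f hf g hg a b ha hb hab
  constructor
  · intro x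
    simp only [Pi.add_apply, Pi.smul_apply, smul_eq_mul]
    have := hf.1 x; have := hg.1 x
    positivity
  · intro s hs
    simp only [Pi.add_apply, Pi.smul_apply, smul_eq_mul]
    rw [Finset.sum_add_distrib, ← Finset.mul_sum, ← Finset.mul_sum]
    have h1 := hf.2 s hs
    have h2 := hg.2 s hs
    nlinarith

noncomputable def lfun (c : P → ℝ) : (P → ℝ) →L[ℝ] ℝ :=
  LinearMap.toContinuousLinearMap
    { toFun := fun f => ∑ x, c x * f x
      map_add' := fun f g => by
        simp only [Pi.add_apply, mul_add, Finset.sum_add_distrib]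
      map_smul' := fun a f => by
        simp only [Pi.smul_apply, smul_eq_mul, RingHom.id_apply]
        rw [Finset.mul_sum]
        exact Finset.sum_congr rfl fun x _ => by ring }

lemma lfun_apply (c : P → ℝ) (f : P → ℝ) : lfun P c f = ∑ x, c x * f x := rfl

lemma lfun_rho (c : P → ℝ) (W : Finset P) : lfun P c (rho P W) = ∑ x ∈ W, c x := by
  simp only [lfun_apply, rho, mul_ite, mul_one, mul_zero]
  rw [Finset.sum_ite_mem, Finset.univ_inter]

lemma edge_chain (L B : Finset P)
    (hLa : IsAntichainF P L) (hBa : IsAntichainF P B)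
    (hLne : L.Nonempty) (hBne : B.Nonempty)
    (hLB : ∀ x ∈ L, ∀ y ∈ B, x < y) :
    IsEdgeOf P (chainPolytope P) (rho P L) (rho P B) := by
  classical
  have hLBd : ∀ x, x ∈ L → x ∉ B := fun x h1 h2 => lt_irrefl x (hLB x h1 x h2)
  have hBLd : ∀ x, x ∈ B → x ∉ L := fun x h1 h2 => hLBd x h2 h1
  obtain ⟨x0, hx0⟩ := hLne
  obtain ⟨b0, hb0⟩ := hBne
  have hLcard : (0:ℝ) < L.card := by exact_mod_cast Finset.card_pos.mpr ⟨x0, hx0⟩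
  have hBcard : (0:ℝ) < B.card := by exact_mod_cast Finset.card_pos.mpr ⟨b0, hb0⟩
  set c : P → ℝ := fun x => if x ∈ L then (L.card:ℝ)⁻¹ else if x ∈ B then (B.card:ℝ)⁻¹ else -1
    with hcdef
  set l := lfun P c with hldef
  have hlL : l (rho P L) = 1 := by
    rw [hldef, lfun_rho]
    rw [Finset.sum_congr rfl (fun x hx => show c x = (L.card:ℝ)⁻¹ by simp [hcdef, hx]),
      Finset.sum_const, nsmul_eq_mul]
    field_simp
  have hlB : l (rho P B) = 1 := by
    rw [hldef, lfun_rho]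
    rw [Finset.sum_congr rfl (fun x hx => show c x = (B.card:ℝ)⁻¹ by
      simp [hcdef, hx, hBLd x hx]), Finset.sum_const, nsmul_eq_mul]
    field_simp
  have hlf : ∀ f : P → ℝ, l f = (L.card:ℝ)⁻¹ * ∑ x ∈ L, f x
      + (B.card:ℝ)⁻¹ * ∑ x ∈ B, f x - ∑ x ∈ univ \ (L ∪ B), f x := by
    intro f
    rw [hldef, lfun_apply, ← Finset.sum_sdiff (Finset.subset_univ (L ∪ B))]
    have e1 : ∑ x ∈ L ∪ B, c x * f x
        = ∑ x ∈ L, c x * f x + ∑ x ∈ B, c x * f x := by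
      rw [Finset.sum_union (Finset.disjoint_left.mpr (fun {a} h1 h2 => hLBd a h1 h2))]
    have eL : ∑ x ∈ L, c x * f x = (L.card:ℝ)⁻¹ * ∑ x ∈ L, f x := by
      rw [Finset.mul_sum]
      exact Finset.sum_congr rfl fun x hx => by simp [hcdef, hx]
    have eB : ∑ x ∈ B, c x * f x = (B.card:ℝ)⁻¹ * ∑ x ∈ B, f x := by
      rw [Finset.mul_sum]
      exact Finset.sum_congr rfl fun x hx => by simp [hcdef, hx, hBLd x hx]
    have eR : ∑ x ∈ univ \ (L ∪ B), c x * f x = - ∑ x ∈ univ \ (L ∪ B), f x := by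
      rw [← Finset.sum_neg_distrib]
      refine Finset.sum_congr rfl fun x hx => ?_
      simp only [Finset.mem_sdiff, Finset.mem_union] at hx
      push_neg at hx
      simp only [hcdef, if_neg hx.2.1, if_neg hx.2.2]
      ring
    rw [e1, eL, eB, eR]; ring
  have main : ∀ f ∈ chainPolytope P, l f ≤ 1 ∧ (l f = 1 →
      ∃ cl cb : ℝ, 0 ≤ cl ∧ 0 ≤ cb ∧ cl + cb = 1 ∧
        f = cl • rho P L + cb • rho P B) := by
    intro f hf
    obtain ⟨xM, hxM, hxMax⟩ := Finset.exists_max_image L f ⟨x0, hx0⟩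
    obtain ⟨bM, hbM, hbMax⟩ := Finset.exists_max_image B f ⟨b0, hb0⟩
    have hxb : xM < bM := hLB _ hxM _ hbM
    have hchain : IsChain (· ≤ ·) (↑({xM, bM} : Finset P) : Set P) := by
      intro u hu v hv huv
      simp only [Finset.coe_insert, Set.mem_insert_iff, Finset.coe_singleton,
        Set.mem_singleton_iff] at hu hv
      rcases hu with rfl | rfl <;> rcases hv with rfl | rfl <;>
        first
          | exact absurd rfl huv
          | exact Or.inl hxb.le
          | exact Or.inr hxb.le
    have hsum2 : f xM + f bM ≤ 1 := by
      have := hf.2 _ hchain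
      rwa [Finset.sum_pair (ne_of_lt hxb)] at this
    have bndL : (L.card:ℝ)⁻¹ * ∑ x ∈ L, f x ≤ f xM := by
      have h1 : ∑ x ∈ L, f x ≤ (L.card:ℝ) * f xM := by
        have := Finset.sum_le_card_nsmul L f (f xM) (fun x hx => hxMax x hx)
        rwa [nsmul_eq_mul] at this
      calc (L.card:ℝ)⁻¹ * ∑ x ∈ L, f x ≤ (L.card:ℝ)⁻¹ * ((L.card:ℝ) * f xM) :=
            mul_le_mul_of_nonneg_left h1 (by positivity)
        _ = f xM := by field_simp
    have bndB : (B.card:ℝ)⁻¹ * ∑ x ∈ B, f x ≤ f bM := by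
      have h1 : ∑ x ∈ B, f x ≤ (B.card:ℝ) * f bM := by
        have := Finset.sum_le_card_nsmul B f (f bM) (fun x hx => hbMax x hx)
        rwa [nsmul_eq_mul] at this
      calc (B.card:ℝ)⁻¹ * ∑ x ∈ B, f x ≤ (B.card:ℝ)⁻¹ * ((B.card:ℝ) * f bM) :=
            mul_le_mul_of_nonneg_left h1 (by positivity)
        _ = f bM := by field_simp
    have hR : 0 ≤ ∑ x ∈ univ \ (L ∪ B), f x := Finset.sum_nonneg fun x _ => hf.1 x
    constructor
    · rw [hlf]; linarith
    · intro heq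
      rw [hlf] at heq
      have hRz : ∑ x ∈ univ \ (L ∪ B), f x = 0 := by linarith
      have eL : (L.card:ℝ)⁻¹ * ∑ x ∈ L, f x = f xM := by linarith
      have eB : (B.card:ℝ)⁻¹ * ∑ x ∈ B, f x = f bM := by linarith
      have hsum1 : f xM + f bM = 1 := by linarith
      have hLne0 : (L.card:ℝ) ≠ 0 := ne_of_gt hLcard
      have hBne0 : (B.card:ℝ) ≠ 0 := ne_of_gt hBcard
      field_simp at eL eB
      have hconstL : ∀ x ∈ L, f x = f xM := by
        have hz : ∑ x ∈ L, (f xM - f x) = 0 := by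
          rw [Finset.sum_sub_distrib, Finset.sum_const, nsmul_eq_mul]
          linarith
        intro x hx
        have := (Finset.sum_eq_zero_iff_of_nonneg
          fun i hi => sub_nonneg.mpr (hxMax i hi)).mp hz x hx
        linarith
      have hconstB : ∀ x ∈ B, f x = f bM := by
        have hz : ∑ x ∈ B, (f bM - f x) = 0 := by
          rw [Finset.sum_sub_distrib, Finset.sum_const, nsmul_eq_mul]
          linarith
        intro x hx
        have := (Finset.sum_eq_zero_iff_of_nonneg
          fun i hi => sub_nonneg.mpr (hbMax i hi)).mp hz x hx
        linarith
      have hout : ∀ x, x ∉ L → x ∉ B → f x = 0 := by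
        intro x h1 h2
        have hx : x ∈ univ \ (L ∪ B) := by simp [h1, h2]
        exact (Finset.sum_eq_zero_iff_of_nonneg fun i _ => hf.1 i).mp hRz x hx
      refine ⟨f xM, f bM, hf.1 xM, hf.1 bM, hsum1, ?_⟩
      funext z
      simp only [Pi.add_apply, Pi.smul_apply, smul_eq_mul, rho]
      by_cases hzL : z ∈ L
      · rw [hconstL z hzL]; simp [hzL, hLBd z hzL]
      · by_cases hzB : z ∈ B
        · rw [hconstB z hzB]; simp [hzL, hzB]
        · rw [hout z hzL hzB]; simp [hzL, hzB]
  have hne1 : rho P L ≠ rho P B := by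
    intro h
    have := congrFun h x0
    simp [rho, hx0, hLBd x0 hx0] at this
  refine ⟨hne1, ?_⟩
  intro _
  refine ⟨l, ?_⟩
  apply Set.Subset.antisymm
  · apply convexHull_min
    · rintro u hu
      rcases hu with rfl | rfl
      · exact ⟨rho_mem_chainPolytope P hLa, fun y hy => by rw [hlL]; exact (main y hy).1⟩
      · exact ⟨rho_mem_chainPolytope P hBa, fun y hy => by rw [hlB]; exact (main y hy).1⟩
    · rintro x ⟨hxC, hx⟩ y ⟨hyC, hy⟩ a b ha hb hab1
      refine ⟨chainPolytope_convex P hxC hyC ha hb hab1, ?_⟩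
      intro g hg
      have h1 : l g ≤ l x := hx g hg
      have h2 : l g ≤ l y := hy g hg
      have hval : l (a • x + b • y) = a * l x + b * l y := by
        rw [map_add, map_smul, map_smul]; simp
      rw [hval]
      calc l g = a * l g + b * l g := by rw [← add_mul, hab1, one_mul]
        _ ≤ a * l x + b * l y :=
            add_le_add (mul_le_mul_of_nonneg_left h1 ha) (mul_le_mul_of_nonneg_left h2 hb)
  · rintro f ⟨hfC, hfmax⟩
    have h1 : l f ≤ 1 := (main f hfC).1
    have h2 : (1:ℝ) ≤ l f := by
      have := hfmax (rho P L) (rho_mem_chainPolytope P hLa)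
      rwa [hlL] at this
    obtain ⟨cl, cb, hcl, hcb, hsum, heqf⟩ := (main f hfC).2 (le_antisymm h1 h2)
    have hu : rho P L ∈ ({rho P L, rho P B} : Set (P → ℝ)) := by simp
    have hv : rho P B ∈ ({rho P L, rho P B} : Set (P → ℝ)) := by simp
    have := (convex_convexHull ℝ ({rho P L, rho P B} : Set (P → ℝ)))
      (subset_convexHull ℝ _ hu) (subset_convexHull ℝ _ hv) hcl hcb hsum
    rwa [← heqf] at this

set_option maxHeartbeats 1000000 in
lemma triface_chain (A L B : Finset P)
    (hAa : IsAntichainF P A) (hLa : IsAntichainF P L) (hBa : IsAntichainF P B)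
    (hAne : A.Nonempty) (hLne : L.Nonempty) (hBne : B.Nonempty)
    (hAL : ∀ x ∈ A, ∀ y ∈ L, x < y) (hLB : ∀ x ∈ L, ∀ y ∈ B, x < y)
    (hAB : ∀ x ∈ A, ∀ y ∈ B, x < y) :
    IsTriFaceOf P (chainPolytope P) (rho P A) (rho P L) (rho P B) := by
  classical
  have hALd : ∀ x, x ∈ A → x ∉ L := fun x h1 h2 => lt_irrefl x (hAL x h1 x h2)
  have hLBd : ∀ x, x ∈ L → x ∉ B := fun x h1 h2 => lt_irrefl x (hLB x h1 x h2)
  have hABd : ∀ x, x ∈ A → x ∉ B := fun x h1 h2 => lt_irrefl x (hAB x h1 x h2)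
  have hLAd : ∀ x, x ∈ L → x ∉ A := fun x h1 h2 => hALd x h2 h1
  have hBLd : ∀ x, x ∈ B → x ∉ L := fun x h1 h2 => hLBd x h2 h1
  have hBAd : ∀ x, x ∈ B → x ∉ A := fun x h1 h2 => hABd x h2 h1
  obtain ⟨a0, ha0⟩ := hAne
  obtain ⟨x0, hx0⟩ := hLne
  obtain ⟨b0, hb0⟩ := hBne
  have hAcard : (0:ℝ) < A.card := by exact_mod_cast Finset.card_pos.mpr ⟨a0, ha0⟩
  have hLcard : (0:ℝ) < L.card := by exact_mod_cast Finset.card_pos.mpr ⟨x0, hx0⟩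
  have hBcard : (0:ℝ) < B.card := by exact_mod_cast Finset.card_pos.mpr ⟨b0, hb0⟩
  set c : P → ℝ := fun x => if x ∈ A then (A.card:ℝ)⁻¹ else if x ∈ L then (L.card:ℝ)⁻¹
    else if x ∈ B then (B.card:ℝ)⁻¹ else -1 with hcdef
  set l := lfun P c with hldef
  have hlA : l (rho P A) = 1 := by
    rw [hldef, lfun_rho]
    rw [Finset.sum_congr rfl (fun x hx => show c x = (A.card:ℝ)⁻¹ by simp [hcdef, hx]),
      Finset.sum_const, nsmul_eq_mul]
    field_simp
  have hlL : l (rho P L) = 1 := by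
    rw [hldef, lfun_rho]
    rw [Finset.sum_congr rfl (fun x hx => show c x = (L.card:ℝ)⁻¹ by
      simp [hcdef, hx, hLAd x hx]), Finset.sum_const, nsmul_eq_mul]
    field_simp
  have hlB : l (rho P B) = 1 := by
    rw [hldef, lfun_rho]
    rw [Finset.sum_congr rfl (fun x hx => show c x = (B.card:ℝ)⁻¹ by
      simp [hcdef, hx, hBAd x hx, hBLd x hx]), Finset.sum_const, nsmul_eq_mul]
    field_simp
  have hlf : ∀ f : P → ℝ, l f = (A.card:ℝ)⁻¹ * ∑ x ∈ A, f x
      + (L.card:ℝ)⁻¹ * ∑ x ∈ L, f x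
      + (B.card:ℝ)⁻¹ * ∑ x ∈ B, f x - ∑ x ∈ univ \ (A ∪ L ∪ B), f x := by
    intro f
    rw [hldef, lfun_apply, ← Finset.sum_sdiff (Finset.subset_univ (A ∪ L ∪ B))]
    have e1 : ∑ x ∈ A ∪ L ∪ B, c x * f x
        = ∑ x ∈ A, c x * f x + ∑ x ∈ L, c x * f x + ∑ x ∈ B, c x * f x := by
      rw [Finset.sum_union (Finset.disjoint_union_left.mpr
        ⟨Finset.disjoint_left.mpr (fun {a} h1 h2 => hABd a h1 h2),
         Finset.disjoint_left.mpr (fun {a} h1 h2 => hLBd a h1 h2)⟩),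
        Finset.sum_union (Finset.disjoint_left.mpr (fun {a} h1 h2 => hALd a h1 h2))]
    have eA : ∑ x ∈ A, c x * f x = (A.card:ℝ)⁻¹ * ∑ x ∈ A, f x := by
      rw [Finset.mul_sum]
      exact Finset.sum_congr rfl fun x hx => by simp [hcdef, hx]
    have eL : ∑ x ∈ L, c x * f x = (L.card:ℝ)⁻¹ * ∑ x ∈ L, f x := by
      rw [Finset.mul_sum]
      exact Finset.sum_congr rfl fun x hx => by simp [hcdef, hx, hLAd x hx]
    have eB : ∑ x ∈ B, c x * f x = (B.card:ℝ)⁻¹ * ∑ x ∈ B, f x := by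
      rw [Finset.mul_sum]
      exact Finset.sum_congr rfl fun x hx => by simp [hcdef, hx, hBAd x hx, hBLd x hx]
    have eR : ∑ x ∈ univ \ (A ∪ L ∪ B), c x * f x = - ∑ x ∈ univ \ (A ∪ L ∪ B), f x := by
      rw [← Finset.sum_neg_distrib]
      refine Finset.sum_congr rfl fun x hx => ?_
      simp only [Finset.mem_sdiff, Finset.mem_union] at hx
      push_neg at hx
      simp only [hcdef, if_neg hx.2.1.1, if_neg hx.2.1.2, if_neg hx.2.2]
      ring
    rw [e1, eA, eL, eB, eR]; ring
  have main : ∀ f ∈ chainPolytope P, l f ≤ 1 ∧ (l f = 1 →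
      ∃ ca cl cb : ℝ, 0 ≤ ca ∧ 0 ≤ cl ∧ 0 ≤ cb ∧ ca + cl + cb = 1 ∧
        f = ca • rho P A + cl • rho P L + cb • rho P B) := by
    intro f hf
    obtain ⟨aM, haM, haMax⟩ := Finset.exists_max_image A f ⟨a0, ha0⟩
    obtain ⟨xM, hxM, hxMax⟩ := Finset.exists_max_image L f ⟨x0, hx0⟩
    obtain ⟨bM, hbM, hbMax⟩ := Finset.exists_max_image B f ⟨b0, hb0⟩
    have hax : aM < xM := hAL _ haM _ hxM
    have hxb : xM < bM := hLB _ hxM _ hbM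
    have hab : aM < bM := hAB _ haM _ hbM
    have hchain : IsChain (· ≤ ·) (↑({aM, xM, bM} : Finset P) : Set P) := by
      intro u hu v hv huv
      simp only [Finset.coe_insert, Set.mem_insert_iff, Finset.coe_singleton,
        Set.mem_singleton_iff] at hu hv
      rcases hu with rfl | rfl | rfl <;> rcases hv with rfl | rfl | rfl <;>
        first
          | exact absurd rfl huv
          | exact Or.inl hax.le
          | exact Or.inl hxb.le
          | exact Or.inl hab.le
          | exact Or.inr hax.le
          | exact Or.inr hxb.le
          | exact Or.inr hab.le
    have hsum3 : f aM + f xM + f bM ≤ 1 := by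
      have := hf.2 _ hchain
      rwa [Finset.sum_insert (by simp [ne_of_lt hax, ne_of_lt hab]),
        Finset.sum_pair (ne_of_lt hxb), ← add_assoc] at this
    have bndA : (A.card:ℝ)⁻¹ * ∑ x ∈ A, f x ≤ f aM := by
      have h1 : ∑ x ∈ A, f x ≤ (A.card:ℝ) * f aM := by
        have := Finset.sum_le_card_nsmul A f (f aM) (fun x hx => haMax x hx)
        rwa [nsmul_eq_mul] at this
      calc (A.card:ℝ)⁻¹ * ∑ x ∈ A, f x ≤ (A.card:ℝ)⁻¹ * ((A.card:ℝ) * f aM) :=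
            mul_le_mul_of_nonneg_left h1 (by positivity)
        _ = f aM := by field_simp
    have bndL : (L.card:ℝ)⁻¹ * ∑ x ∈ L, f x ≤ f xM := by
      have h1 : ∑ x ∈ L, f x ≤ (L.card:ℝ) * f xM := by
        have := Finset.sum_le_card_nsmul L f (f xM) (fun x hx => hxMax x hx)
        rwa [nsmul_eq_mul] at this
      calc (L.card:ℝ)⁻¹ * ∑ x ∈ L, f x ≤ (L.card:ℝ)⁻¹ * ((L.card:ℝ) * f xM) :=
            mul_le_mul_of_nonneg_left h1 (by positivity)
        _ = f xM := by field_simp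
    have bndB : (B.card:ℝ)⁻¹ * ∑ x ∈ B, f x ≤ f bM := by
      have h1 : ∑ x ∈ B, f x ≤ (B.card:ℝ) * f bM := by
        have := Finset.sum_le_card_nsmul B f (f bM) (fun x hx => hbMax x hx)
        rwa [nsmul_eq_mul] at this
      calc (B.card:ℝ)⁻¹ * ∑ x ∈ B, f x ≤ (B.card:ℝ)⁻¹ * ((B.card:ℝ) * f bM) :=
            mul_le_mul_of_nonneg_left h1 (by positivity)
        _ = f bM := by field_simp
    have hR : 0 ≤ ∑ x ∈ univ \ (A ∪ L ∪ B), f x := Finset.sum_nonneg fun x _ => hf.1 x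
    constructor
    · rw [hlf]; linarith
    · intro heq
      rw [hlf] at heq
      have hRz : ∑ x ∈ univ \ (A ∪ L ∪ B), f x = 0 := by linarith
      have eA : (A.card:ℝ)⁻¹ * ∑ x ∈ A, f x = f aM := by linarith
      have eL : (L.card:ℝ)⁻¹ * ∑ x ∈ L, f x = f xM := by linarith
      have eB : (B.card:ℝ)⁻¹ * ∑ x ∈ B, f x = f bM := by linarith
      have hsum1 : f aM + f xM + f bM = 1 := by linarith
      have hAne0 : (A.card:ℝ) ≠ 0 := ne_of_gt hAcard
      have hLne0 : (L.card:ℝ) ≠ 0 := ne_of_gt hLcard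
      have hBne0 : (B.card:ℝ) ≠ 0 := ne_of_gt hBcard
      field_simp at eA eL eB
      have hconstA : ∀ x ∈ A, f x = f aM := by
        have hz : ∑ x ∈ A, (f aM - f x) = 0 := by
          rw [Finset.sum_sub_distrib, Finset.sum_const, nsmul_eq_mul]
          linarith
        intro x hx
        have := (Finset.sum_eq_zero_iff_of_nonneg
          fun i hi => sub_nonneg.mpr (haMax i hi)).mp hz x hx
        linarith
      have hconstL : ∀ x ∈ L, f x = f xM := by
        have hz : ∑ x ∈ L, (f xM - f x) = 0 := by
          rw [Finset.sum_sub_distrib, Finset.sum_const, nsmul_eq_mul]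
          linarith
        intro x hx
        have := (Finset.sum_eq_zero_iff_of_nonneg
          fun i hi => sub_nonneg.mpr (hxMax i hi)).mp hz x hx
        linarith
      have hconstB : ∀ x ∈ B, f x = f bM := by
        have hz : ∑ x ∈ B, (f bM - f x) = 0 := by
          rw [Finset.sum_sub_distrib, Finset.sum_const, nsmul_eq_mul]
          linarith
        intro x hx
        have := (Finset.sum_eq_zero_iff_of_nonneg
          fun i hi => sub_nonneg.mpr (hbMax i hi)).mp hz x hx
        linarith
      have hout : ∀ x, x ∉ A → x ∉ L → x ∉ B → f x = 0 := by
        intro x h1 h2 h3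
        have hx : x ∈ univ \ (A ∪ L ∪ B) := by simp [h1, h2, h3]
        exact (Finset.sum_eq_zero_iff_of_nonneg fun i _ => hf.1 i).mp hRz x hx
      refine ⟨f aM, f xM, f bM, hf.1 aM, hf.1 xM, hf.1 bM, hsum1, ?_⟩
      funext z
      simp only [Pi.add_apply, Pi.smul_apply, smul_eq_mul, rho]
      by_cases hzA : z ∈ A
      · rw [hconstA z hzA]; simp [hzA, hALd z hzA, hABd z hzA]
      · by_cases hzL : z ∈ L
        · rw [hconstL z hzL]; simp [hzA, hzL, hLBd z hzL]
        · by_cases hzB : z ∈ B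
          · rw [hconstB z hzB]; simp [hzA, hzL, hzB]
          · rw [hout z hzA hzL hzB]; simp [hzA, hzL, hzB]
  have hne1 : rho P A ≠ rho P L := by
    intro h
    have := congrFun h a0
    simp [rho, ha0, hALd a0 ha0] at this
  have hne2 : rho P A ≠ rho P B := by
    intro h
    have := congrFun h a0
    simp [rho, ha0, hABd a0 ha0] at this
  have hne3 : rho P L ≠ rho P B := by
    intro h
    have := congrFun h x0
    simp [rho, hx0, hLBd x0 hx0] at this
  refine ⟨hne1, hne2, hne3, ?_⟩
  intro _
  refine ⟨l, ?_⟩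
  apply Set.Subset.antisymm
  · apply convexHull_min
    · rintro u hu
      rcases hu with rfl | rfl | rfl
      · exact ⟨rho_mem_chainPolytope P hAa, fun y hy => by rw [hlA]; exact (main y hy).1⟩
      · exact ⟨rho_mem_chainPolytope P hLa, fun y hy => by rw [hlL]; exact (main y hy).1⟩
      · exact ⟨rho_mem_chainPolytope P hBa, fun y hy => by rw [hlB]; exact (main y hy).1⟩
    · rintro x ⟨hxC, hx⟩ y ⟨hyC, hy⟩ a b ha hb hab1
      refine ⟨chainPolytope_convex P hxC hyC ha hb hab1, ?_⟩
      intro g hg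
      have h1 : l g ≤ l x := hx g hg
      have h2 : l g ≤ l y := hy g hg
      have hval : l (a • x + b • y) = a * l x + b * l y := by
        rw [map_add, map_smul, map_smul]; simp
      rw [hval]
      calc l g = a * l g + b * l g := by rw [← add_mul, hab1, one_mul]
        _ ≤ a * l x + b * l y :=
            add_le_add (mul_le_mul_of_nonneg_left h1 ha) (mul_le_mul_of_nonneg_left h2 hb)
  · rintro f ⟨hfC, hfmax⟩
    have h1 : l f ≤ 1 := (main f hfC).1
    have h2 : (1:ℝ) ≤ l f := by
      have := hfmax (rho P A) (rho_mem_chainPolytope P hAa)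
      rwa [hlA] at this
    obtain ⟨ca, cl, cb, hca, hcl, hcb, hsum, heqf⟩ := (main f hfC).2 (le_antisymm h1 h2)
    have hws : ∑ i : Fin 3, ![ca, cl, cb] i = 1 := by
      rw [Fin.sum_univ_three]; simpa using hsum
    have hcm : (Finset.univ : Finset (Fin 3)).centerMass ![ca, cl, cb]
        ![rho P A, rho P L, rho P B] = f := by
      rw [Finset.centerMass, hws, Fin.sum_univ_three]
      simp only [inv_one, one_smul, Matrix.cons_val_zero, Matrix.cons_val_one,
        Matrix.head_cons, Matrix.cons_val_two, Matrix.tail_cons]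
      rw [heqf]
    rw [← hcm]
    apply Finset.centerMass_mem_convexHull
    · intro i _
      fin_cases i
      · exact hca
      · exact hcl
      · exact hcb
    · rw [hws]; norm_num
    · intro i _; fin_cases i <;> simp

lemma not_edge_order (I B : Finset P) (hI : IsIdealF P I)
    (hIB : ∀ b ∈ B, b ∉ I)
    (hins : ∀ b ∈ B, IsIdealF P (insert b I))
    (b1 b2 : P) (hb1 : b1 ∈ B) (hb2 : b2 ∈ B) (hb12 : b1 ≠ b2) :
    ¬ IsEdgeOf P (orderPolytope P) (rho P I) (rho P (I ∪ B)) := by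
  classical
  rintro ⟨hne, hexp⟩
  have hIUB : IsIdealF P (I ∪ B) := by
    intro x y hx hyx
    rcases Finset.mem_union.mp hx with hx' | hx'
    · exact Finset.mem_union_left _ (hI hx' hyx)
    · have := hins x hx' (Finset.mem_insert_self x I) hyx
      rcases Finset.mem_insert.mp this with rfl | h
      · exact Finset.mem_union_right _ hx'
      · exact Finset.mem_union_left _ h
  set u := rho P I with hu
  set v := rho P (I ∪ B) with hv
  have huO : u ∈ orderPolytope P := rho_mem_orderPolytope P hI
  have hvO : v ∈ orderPolytope P := rho_mem_orderPolytope P hIUB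
  have humem0 : u ∈ convexHull ℝ {u, v} := subset_convexHull ℝ _ (by simp)
  have hvmem0 : v ∈ convexHull ℝ {u, v} := subset_convexHull ℝ _ (by simp)
  obtain ⟨l, hface⟩ := hexp ⟨u, humem0⟩
  rw [hface] at humem0 hvmem0
  obtain ⟨-, hu_max⟩ := humem0
  obtain ⟨-, hv_max⟩ := hvmem0
  have huv : l u = l v := le_antisymm (hv_max u huO) (hu_max v hvO)
  have hw_eq : ∀ b ∈ B, rho P (insert b I) = u + rho P {b} := by
    intro b hb
    funext x
    by_cases hxb : x = b
    · subst hxb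
      have hxI := hIB _ hb
      simp [rho, hu, Pi.add_apply, hxI]
    · simp [rho, hu, Pi.add_apply, hxb, Finset.mem_insert]
  have hle : ∀ b ∈ B, l (rho P {b}) ≤ 0 := by
    intro b hb
    have hwO := rho_mem_orderPolytope P (hins b hb)
    have := hu_max _ hwO
    rw [hw_eq b hb, map_add] at this
    linarith
  have hv_eq : v = u + ∑ b ∈ B, rho P {b} := by
    funext x
    simp only [Pi.add_apply, Finset.sum_apply]
    by_cases hxB : x ∈ B
    · have hxI : x ∉ I := hIB x hxB
      simp [rho, hu, hv, hxB, hxI, Finset.mem_union, Finset.sum_ite_eq]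
    · by_cases hxI : x ∈ I <;>
        simp [rho, hu, hv, hxB, hxI, Finset.mem_union, Finset.sum_ite_eq]
  have hsum : ∑ b ∈ B, l (rho P {b}) = 0 := by
    have h1 : l v = l u + ∑ b ∈ B, l (rho P {b}) := by
      rw [hv_eq, map_add, map_sum]
    linarith
  have hzero : ∀ b ∈ B, l (rho P {b}) = 0 :=
    fun b hb => (Finset.sum_eq_zero_iff_of_nonpos hle).mp hsum b hb
  have hw1mem : rho P (insert b1 I) ∈ convexHull ℝ {u, v} := by
    rw [hface]
    refine ⟨rho_mem_orderPolytope P (hins b1 hb1), ?_⟩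
    intro y hy
    rw [hw_eq b1 hb1, map_add, hzero b1 hb1, add_zero]
    exact hu_max y hy
  rw [convexHull_pair] at hw1mem
  obtain ⟨a, b, ha, hb, hab, habeq⟩ := hw1mem
  have hb1I : b1 ∉ I := hIB b1 hb1
  have hb2I : b2 ∉ I := hIB b2 hb2
  have h1 := congrFun habeq b1
  have h2 := congrFun habeq b2
  have hm1 : b1 ∈ I ∪ B := Finset.mem_union_right I hb1
  have hm2 : b2 ∈ I ∪ B := Finset.mem_union_right I hb2
  have hni : b2 ∉ insert b1 I := by simp [hb2I, Ne.symm hb12]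
  simp only [Pi.add_apply, Pi.smul_apply, smul_eq_mul, rho, hu, hv,
    if_pos hm1, if_pos hm2, if_neg hb1I, if_neg hb2I,
    if_pos (Finset.mem_insert_self b1 I), if_neg hni,
    mul_zero, mul_one, zero_add, add_zero] at h1 h2
  linarith

set_option linter.unusedSectionVars true

/-- In a maximal ranked poset, for `2 ≤ t ≤ s ≤ n`, `A ⊆ P_{s-t}` with
`|A| ≥ 2` and `B ⊆ P_s` with `|B| ≥ 2`, the sets `A`, `P_{s-1}`, `B` are pairwise
distinct antichains, `{A, P_{s-1}, B} ∈ Δ*_C(P)`, and `{P_{s-1}, B} ∈ E*_C(P)`. -/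
theorem triple_mem_DeltaStarC
    (r : P → ℕ) (n : ℕ) (hr : IsMaxRanked P r n)
    (s t : ℕ) (ht : 2 ≤ t) (hts : t ≤ s) (hsn : s ≤ n)
    (A B : Finset P)
    (hA : A ⊆ level P r (s - t)) (hAcard : 2 ≤ A.card)
    (hB : B ⊆ level P r s) (hBcard : 2 ≤ B.card) :
    IsAntichainF P A ∧ IsAntichainF P (level P r (s - 1)) ∧ IsAntichainF P B ∧
    A ≠ level P r (s - 1) ∧ A ≠ B ∧ level P r (s - 1) ≠ B ∧
    ({A, level P r (s - 1), B} : Finset (Finset P)) ∈ DeltaStarC P ∧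
    EstarC P (level P r (s - 1)) B := by
  classical
  obtain ⟨hrn, hsurj, hlt⟩ := hr
  set L := level P r (s - 1) with hLdef
  have memA : ∀ x ∈ A, r x = s - t := fun x hx => (Finset.mem_filter.mp (hA hx)).2
  have memL : ∀ x ∈ L, r x = s - 1 := fun x hx => (Finset.mem_filter.mp hx).2
  have memB : ∀ x ∈ B, r x = s := fun x hx => (Finset.mem_filter.mp (hB hx)).2
  have hAne : A.Nonempty := Finset.card_pos.mp (by omega)
  have hBne : B.Nonempty := Finset.card_pos.mp (by omega)
  have hLne : L.Nonempty := by
    obtain ⟨x, hx⟩ := hsurj (s - 1) (by omega)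
    exact ⟨x, Finset.mem_filter.mpr ⟨Finset.mem_univ x, hx⟩⟩
  obtain ⟨a0, ha0⟩ := hAne
  obtain ⟨x0, hx0⟩ := hLne
  obtain ⟨b0, hb0⟩ := hBne
  have hAL : ∀ x ∈ A, ∀ y ∈ L, x < y := fun x hx y hy =>
    (hlt x y).mpr (by have h1 := memA x hx; have h2 := memL y hy; omega)
  have hLB : ∀ x ∈ L, ∀ y ∈ B, x < y := fun x hx y hy =>
    (hlt x y).mpr (by have h1 := memL x hx; have h2 := memB y hy; omega)
  have hAB : ∀ x ∈ A, ∀ y ∈ B, x < y := fun x hx y hy =>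
    (hlt x y).mpr (by have h1 := memA x hx; have h2 := memB y hy; omega)
  have antiOf : ∀ {W : Finset P} {i : ℕ}, (∀ x ∈ W, r x = i) → IsAntichainF P W := by
    intro W i hW x hx y hy hxy hle
    have h : x < y := lt_of_le_of_ne hle hxy
    have h1 := hW x (Finset.mem_coe.mp hx)
    have h2 := hW y (Finset.mem_coe.mp hy)
    have := (hlt x y).mp h
    omega
  have antiA : IsAntichainF P A := antiOf memA
  have antiL : IsAntichainF P L := antiOf memL
  have antiB : IsAntichainF P B := antiOf memB
  have hALne : A ≠ L := by
    intro h
    have h1 := memL a0 (h ▸ ha0)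
    have h2 := memA a0 ha0
    omega
  have hABne : A ≠ B := by
    intro h
    have h1 := memB a0 (h ▸ ha0)
    have h2 := memA a0 ha0
    omega
  have hLBne : L ≠ B := by
    intro h
    have h1 := memB x0 (h ▸ hx0)
    have h2 := memL x0 hx0
    omega
  have htri : IsTriFaceOf P (chainPolytope P) (rho P A) (rho P L) (rho P B) :=
    triface_chain P A L B antiA antiL antiB ⟨a0, ha0⟩ ⟨x0, hx0⟩ ⟨b0, hb0⟩ hAL hLB hAB
  have hedge : IsEdgeOf P (chainPolytope P) (rho P L) (rho P B) :=
    edge_chain P L B antiL antiB ⟨x0, hx0⟩ ⟨b0, hb0⟩ hLB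
  have hgenL : genIdeal P L = univ.filter (fun x => r x < s) := by
    ext x
    simp only [genIdeal, Finset.mem_filter, Finset.mem_univ, true_and]
    constructor
    · rintro ⟨a, ha, hxa⟩
      have hra := memL a ha
      rcases lt_or_eq_of_le hxa with h | h
      · have := (hlt x a).mp h; omega
      · subst h; omega
    · intro hx
      by_cases hxL : r x = s - 1
      · exact ⟨x, Finset.mem_filter.mpr ⟨Finset.mem_univ x, hxL⟩, le_refl x⟩
      · exact ⟨x0, hx0, ((hlt x x0).mpr (by have := memL x0 hx0; omega)).le⟩
  have hgenB : genIdeal P B = genIdeal P L ∪ B := by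
    ext x
    rw [Finset.mem_union, hgenL]
    simp only [genIdeal, Finset.mem_filter, Finset.mem_univ, true_and]
    constructor
    · rintro ⟨b, hbB, hxb⟩
      rcases lt_or_eq_of_le hxb with h | h
      · exact Or.inl (by have h1 := memB b hbB; have := (hlt x b).mp h; omega)
      · subst h; exact Or.inr hbB
    · rintro (hx | hx)
      · exact ⟨b0, hb0, ((hlt x b0).mpr (by have := memB b0 hb0; omega)).le⟩
      · exact ⟨x, hx, le_refl x⟩
  have hIdealL : IsIdealF P (genIdeal P L) := by
    intro x y hx hyx
    simp only [genIdeal, Finset.mem_filter, Finset.mem_univ, true_and] at hx ⊢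
    obtain ⟨a, ha, hxa⟩ := hx
    exact ⟨a, ha, le_trans hyx hxa⟩
  have hBnotin : ∀ b ∈ B, b ∉ genIdeal P L := by
    intro b hbB hmem
    rw [hgenL] at hmem
    have h1 := (Finset.mem_filter.mp hmem).2
    have h2 := memB b hbB
    omega
  have hins : ∀ b ∈ B, IsIdealF P (insert b (genIdeal P L)) := by
    intro b hbB x y hx hyx
    rcases Finset.mem_insert.mp hx with h | hx'
    · subst h
      rcases lt_or_eq_of_le hyx with h | h
      · refine Finset.mem_insert_of_mem ?_
        rw [hgenL]
        refine Finset.mem_filter.mpr ⟨Finset.mem_univ y, ?_⟩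
        have h1 := (hlt y x).mp h
        have h2 := memB x hbB
        omega
      · subst h; exact hx
    · exact Finset.mem_insert_of_mem (hIdealL hx' hyx)
  obtain ⟨b1, hb1, b2, hb2, hb12⟩ := Finset.one_lt_card.mp (show 1 < B.card by omega)
  have hnotedge : ¬ IsEdgeOf P (orderPolytope P)
      (rho P (genIdeal P L)) (rho P (genIdeal P B)) := by
    rw [hgenB]
    exact not_edge_order P (genIdeal P L) B hIdealL hBnotin hins b1 b2 hb1 hb2 hb12
  have hEstar : EstarC P L B := ⟨antiL, antiB, hLBne, hedge, hnotedge⟩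
  refine ⟨antiA, antiL, antiB, hALne, hABne, hLBne, ?_, hEstar⟩
  exact ⟨⟨A, L, B, rfl, hALne, hABne, hLBne, antiA, antiL, antiB, htri⟩,
    L, by simp, B, by simp, hLBne, hEstar⟩
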